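/- Let k ≥ 2, n = 4k, H the regular Cayley representation of Q_{4k} in Sym_n, and π : FM_n → S_n(H) the canonical projection. Let 1 ≤ i < n, τ ∈ H and w_1, w_2 ∈ FM_n with π(w_1) = π(x_{τ(i+1)}···x_{τ(n)} w_2). Then either w_1 = x_{τ(i+1)}···x_{τ(n)} w_2' for some w_2' ∈ FM_n, or there exist γ ∈ H and w_2'' ∈ FM_n with w_1 = x_{τ(i+1)}···x_{τ(n−1)} x_{γ(1)}···x_{γ(n−1)} w_2''. -/

import Mathlib

/-- The position in `{1, ..., 4*k}` of an element of the generalized quaternion group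
`Q_{4k}`, under the identification `t^i ↔ i+1` and `t^i * u ↔ i + 2k + 1`
(for `0 ≤ i ≤ 2k-1`), where `t = QuaternionGroup.a 1` and `u = QuaternionGroup.xa 0`.
Note `QuaternionGroup.xa j = u * t^j = t^(-j) * u`. -/
def qpos (k : ℕ) : QuaternionGroup k → ℕ
  | .a i => i.val + 1
  | .xa i => (-i).val + 2 * k + 1

/-- The element of `Q_{4k}` at position `p ∈ {1, ..., 4*k}`. -/
def qofpos (k : ℕ) (p : ℕ) : QuaternionGroup k :=
  if p ≤ 2 * k then .a ((p - 1 : ℕ) : ZMod (2 * k))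
  else .xa (-((p - 2 * k - 1 : ℕ) : ZMod (2 * k)))

/-- The Cayley (left regular) representation of `Q_{4k}` as permutations of the
positions `{1, ..., 4*k}`: the element at position `p` is sent, by `g`, to the
position of `g * (element at position p)`. -/
def qact (k : ℕ) (g : QuaternionGroup k) (p : ℕ) : ℕ :=
  qpos k (g * qofpos k p)

lemma qpos_bounds (k : ℕ) (hk : 2 ≤ k) (x : QuaternionGroup k) :
    1 ≤ qpos k x ∧ qpos k x ≤ 4 * k := by
  haveI : NeZero (2 * k) := ⟨by omega⟩
  cases x with
  | a i => have := i.val_lt; simp only [qpos]; omega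
  | xa i => have := (-i).val_lt; simp only [qpos]; omega

/-- The generator `x_{σ(p)}` (as an element of `Fin (4*k)`, `0`-indexed) of the free
monoid, where `σ` is the permutation of `{1, ..., 4*k}` given by `g ∈ H`. -/
def qletter (k : ℕ) (hk : 2 ≤ k) (g : QuaternionGroup k) (p : ℕ) : Fin (4 * k) :=
  ⟨qact k g p - 1, by
    have h := qpos_bounds k hk (g * qofpos k p)
    simp only [qact]; omega⟩

/-- The word `x_{σ(a)} x_{σ(a+1)} ⋯ x_{σ(a+len-1)}` in the free monoid on
`x_1, ..., x_n` (letters indexed by `Fin (4*k)`, `0`-indexed). -/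
def segWord (k : ℕ) (hk : 2 ≤ k) (g : QuaternionGroup k) (a len : ℕ) :
    FreeMonoid (Fin (4 * k)) :=
  FreeMonoid.ofList ((List.range' a len).map (qletter k hk g))

/-- The word `x_1 x_2 ⋯ x_n`. -/
def baseWord (k : ℕ) : FreeMonoid (Fin (4 * k)) :=
  FreeMonoid.ofList (List.ofFn (fun m : Fin (4 * k) => m))

/-- The defining relations `x_1 ⋯ x_n = x_{σ(1)} ⋯ x_{σ(n)}`, `σ ∈ H`. -/
def qrel (k : ℕ) (hk : 2 ≤ k) (w v : FreeMonoid (Fin (4 * k))) : Prop :=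
  w = baseWord k ∧ ∃ g : QuaternionGroup k, v = segWord k hk g 1 (4 * k)

/-- The congruence on the free monoid generated by the defining relations. -/
def qcon (k : ℕ) (hk : 2 ≤ k) : Con (FreeMonoid (Fin (4 * k))) :=
  conGen (qrel k hk)

/-- The monoid `S_n(H) = ⟨a_1, ..., a_n ∣ a_1 ⋯ a_n = a_{σ(1)} ⋯ a_{σ(n)}, σ ∈ H⟩`
where `n = 4k` and `H` is the regular Cayley representation of `Q_{4k}` in `Sym_n`. -/
abbrev Smon (k : ℕ) (hk : 2 ≤ k) : Type := (qcon k hk).Quotient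

/-!
A suffix of length `2, …, n - 1` of one relator word `x_{σ(1)} ⋯ x_{σ(n)}` (`σ ∈ H`) is never a
prefix of another, so two occurrences of relators in a word overlap in at most one letter. With
`x = x_{τ(i+1)} ⋯ x_{τ(n)}` and `y⁻` denoting `y` without its last letter, the words
`x u` and `x⁻ r₁⁻ ⋯ rₘ⁻ r u` (`m ≥ 0`, all `rⱼ`, `r` relators) therefore form a set that is closed
under replacing an occurrence of a relator by another relator: such an occurrence starts at the
last letter of `x` or of `r`, at the beginning of one of `r₁⁻, …, rₘ⁻, r`, or inside `u`. This set
contains `x w₂`, hence `w₁`.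
-/

namespace List
variable {α : Type*}

theorem drop_prefix_of_append_eq {l y v m z u : List α} (h : l ++ (y ++ v) = m ++ (z ++ u))
    (hlm : l.length ≤ m.length) (hyz : l.length + y.length ≤ m.length + z.length) :
    y.drop (m.length - l.length) <+: z := by
  have h' := congrArg (drop m.length) h
  rw [drop_left, drop_append, drop_eq_nil_of_le hlm, nil_append, drop_append] at h'
  refine prefix_of_prefix_length_le ?_ (prefix_append z u) (by simp; omega)
  rw [← h']
  exact prefix_append _ _

end List

section Overlap
variable {α : Type*}

def OverlapFree (R : Set (List α)) : Prop :=
  ∀ r ∈ R, ∀ r' ∈ R, ∀ s, s <:+ r → s <+: r' → s.length < r.length → s.length ≤ 1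

inductive IsRelChain (R : Set (List α)) : List α → Prop
  | rel {r : List α} (u : List α) : r ∈ R → IsRelChain R (r ++ u)
  | cons {r w : List α} : r ∈ R → IsRelChain R w → IsRelChain R (r.dropLast ++ w)

def IsRelChainFrom (R : Set (List α)) (x w : List α) : Prop :=
  x <+: w ∨ ∃ w', IsRelChain R w' ∧ w = x.dropLast ++ w'

variable {R : Set (List α)} {n : ℕ}

theorem IsRelChain.exists_dropLast_prefix {w : List α} (hw : IsRelChain R w) :
    ∃ r ∈ R, r.dropLast <+: w := by
  cases hw with
  | rel u hr => exact ⟨_, hr, (List.dropLast_prefix _).trans (List.prefix_append _ u)⟩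
  | cons hr _ => exact ⟨_, hr, List.prefix_append _ _⟩

namespace OverlapFree

theorem prefix_or_eq_dropLast (hov : OverlapFree R) (hR : ∀ r ∈ R, r.length = n)
    {r δ x u l v : List α} (hr : r ∈ R) (hδ : δ ∈ R) (hx : x <:+ r)
    (h : x ++ u = l ++ (δ ++ v)) (hlen : x.length < n + l.length) :
    x <+: l ∨ l = x.dropLast := by
  have hxw : x <+: l ++ (δ ++ v) := h ▸ List.prefix_append x u
  have hlw : l <+: l ++ (δ ++ v) := List.prefix_append l _
  rcases le_or_gt x.length l.length with hxl | hlx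
  · exact .inl (List.prefix_of_prefix_length_le hxw hlw hxl)
  have hlx' : l <+: x := List.prefix_of_prefix_length_le hlw hxw hlx.le
  by_cases hl : l.length + 1 = x.length
  · right
    rw [List.dropLast_eq_take, List.prefix_iff_eq_take.mp hlx', ← hl, Nat.add_sub_cancel]
  · exfalso
    have hs := List.drop_prefix_of_append_eq (l := []) (m := l) (by simpa using h)
      (Nat.zero_le _) (by simp [hR δ hδ]; omega)
    have hshort := hov r hr δ hδ _ ((List.drop_suffix _ _).trans hx) (by simpa using hs)
      (by simp [hR r hr]; omega)
    simp only [List.length_drop] at hshort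
    omega

theorem exists_eq_dropLast_append (hov : OverlapFree R) (hR : ∀ r ∈ R, r.length = n)
    {δ x w l v : List α} (hδ : δ ∈ R) (hw : IsRelChain R w)
    (h : x.dropLast ++ w = l ++ (δ ++ v)) (hlen : x.length < n + l.length) :
    ∃ l', l = x.dropLast ++ l' ∧ w = l' ++ (δ ++ v) := by
  rcases le_or_gt x.dropLast.length l.length with hxl | hlx
  · obtain ⟨l', rfl⟩ := List.prefix_of_prefix_length_le (h ▸ List.prefix_append _ w)
      (List.prefix_append l _) hxl
    exact ⟨l', rfl, by simpa using h⟩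
  · exfalso
    have hxd := List.length_dropLast (xs := x)
    obtain ⟨r', hr', w', rfl⟩ := hw.exists_dropLast_prefix
    have hs := List.drop_prefix_of_append_eq (by simpa using h.symm) hlx.le
      (by simp only [List.length_dropLast, hR δ hδ, hR r' hr']; omega)
    have hshort := hov δ hδ r' hr' _ (List.drop_suffix _ _) (hs.trans (List.dropLast_prefix r'))
      (by simp only [List.length_drop, hR δ hδ]; omega)
    simp only [List.length_drop, hR δ hδ] at hshort
    omega

theorem isRelChain_replace (hov : OverlapFree R) (hR : ∀ r ∈ R, r.length = n)
    {δ δ' l v : List α} (hδ : δ ∈ R) (hδ' : δ' ∈ R) (h : IsRelChain R (l ++ (δ ++ v))) :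
    IsRelChain R (l ++ (δ' ++ v)) := by
  generalize hw : l ++ (δ ++ v) = w at h
  induction h generalizing l with
  | @rel r u hr =>
    rcases eq_or_ne l [] with rfl | hl
    · exact .rel v hδ'
    rcases hov.prefix_or_eq_dropLast hR hr hδ List.suffix_rfl hw.symm
        (by rw [hR r hr]; exact Nat.lt_add_of_pos_right (List.length_pos_iff.mpr hl))
      with ⟨l', rfl⟩ | rfl
    · simpa using IsRelChain.rel (l' ++ (δ' ++ v)) hr
    · exact .cons hr (.rel v hδ')
  | @cons r w hr hw' ih =>
    rcases eq_or_ne l [] with rfl | hl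
    · exact .rel v hδ'
    obtain ⟨l', rfl, rfl⟩ := hov.exists_eq_dropLast_append hR hδ hw' hw.symm
      (by rw [hR r hr]; exact Nat.lt_add_of_pos_right (List.length_pos_iff.mpr hl))
    simpa using IsRelChain.cons hr (ih rfl)

theorem isRelChainFrom_replace (hov : OverlapFree R) (hR : ∀ r ∈ R, r.length = n)
    {r x δ δ' l v : List α} (hr : r ∈ R) (hx : x <:+ r) (hxn : x.length < n)
    (hδ : δ ∈ R) (hδ' : δ' ∈ R) (h : IsRelChainFrom R x (l ++ (δ ++ v))) :
    IsRelChainFrom R x (l ++ (δ' ++ v)) := by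
  rcases h with ⟨u, hu⟩ | ⟨w', hw', hw⟩
  · rcases hov.prefix_or_eq_dropLast hR hr hδ hx hu (by omega) with ⟨l', rfl⟩ | rfl
    · exact .inl (by simp)
    · exact .inr ⟨_, .rel v hδ', rfl⟩
  · obtain ⟨l', rfl, rfl⟩ := hov.exists_eq_dropLast_append hR hδ hw' hw.symm (by omega)
    exact .inr ⟨_, hov.isRelChain_replace hR hδ hδ' hw', by simp⟩

end OverlapFree
end Overlap

theorem iff_of_conGen {M : Type*} [Monoid M] {r : M → M → Prop} {P : M → Prop}
    (hP : ∀ a b l u, r a b → (P (l * a * u) ↔ P (l * b * u))) {a b : M} (h : conGen r a b) :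
    P a ↔ P b := by
  let c : Con M :=
    { r := fun x y => ∀ l u, P (l * x * u) ↔ P (l * y * u)
      iseqv := ⟨fun _ _ _ => .rfl, fun h l u => (h l u).symm,
        fun h₁ h₂ l u => (h₁ l u).trans (h₂ l u)⟩
      mul' := fun {x y x' y'} h h' l u => by
        have h₁ := h l (x' * u)
        have h₂ := h' (l * y) u
        simp only [mul_assoc] at h₁ h₂ ⊢
        exact h₁.trans h₂ }
  simpa using Con.conGen_le (c := c).mpr (fun x y hxy l u => hP x y l u hxy) h 1 1

section Quaternion
variable {k : ℕ}

theorem qofpos_of_le {p : ℕ} (h : p ≤ 2 * k) :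
    qofpos k p = .a ((p - 1 : ℕ) : ZMod (2 * k)) := if_pos h

theorem qofpos_of_lt {p : ℕ} (h : 2 * k < p) :
    qofpos k p = .xa (-((p - 2 * k - 1 : ℕ) : ZMod (2 * k))) := if_neg h.not_ge

theorem qpos_injective (hk : k ≠ 0) : Function.Injective (qpos k) := by
  have : NeZero (2 * k) := ⟨by omega⟩
  rintro (i | i) (j | j) h <;> simp only [qpos] at h
  · exact congrArg _ (ZMod.val_injective _ (by omega))
  · have := i.val_lt; have := (-j).val_lt; omega
  · have := j.val_lt; have := (-i).val_lt; omega
  · exact congrArg _ (neg_injective (ZMod.val_injective _ (by omega)))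

theorem qpos_qofpos {p : ℕ} (h1 : 1 ≤ p) (h2 : p ≤ 4 * k) : qpos k (qofpos k p) = p := by
  have : NeZero (2 * k) := ⟨by omega⟩
  rcases le_or_gt p (2 * k) with h | h
  · rw [qofpos_of_le h, qpos, ZMod.val_natCast_of_lt (by omega)]
    omega
  · rw [qofpos_of_lt h, qpos, neg_neg, ZMod.val_natCast_of_lt (by omega)]
    omega

theorem mul_qofpos_eq_of_qletter_eq (hk : 2 ≤ k) {c d : QuaternionGroup k} {p q : ℕ}
    (h : qletter k hk c p = qletter k hk d q) : c * qofpos k p = d * qofpos k q := by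
  apply qpos_injective (by omega : k ≠ 0)
  have := qpos_bounds k hk (c * qofpos k p)
  have := qpos_bounds k hk (d * qofpos k q)
  have := congrArg Fin.val h
  simp only [qletter, qact] at this
  omega

/- Left multiplication by `a m` preserves the cosets `{a i}` and `{xa i}` of `⟨a 1⟩` while `xa m`
swaps them, and `qofpos k (q + 1)` is `qofpos k q * a 1` in the first coset but
`qofpos k q * a (-1)` in the second. -/
theorem not_forall_mul_qofpos_shift (hk : 2 ≤ k) (h : QuaternionGroup k) {p ℓ : ℕ}
    (hp : 2 ≤ p) (hℓ : 2 ≤ ℓ) (hpℓ : p + ℓ = 4 * k + 1) :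
    ¬ ∀ t < ℓ, h * qofpos k (p + t) = qofpos k (1 + t) := by
  have : NeZero (2 * k) := ⟨by omega⟩
  intro hshift
  rcases h with m | m
  · obtain ⟨t, ht, h1, h2⟩ : ∃ t < ℓ, 2 * k < p + t ∧ 1 + t ≤ 2 * k := by
      rcases le_or_gt p (2 * k) with hb | hb
      · exact ⟨2 * k + 1 - p, by omega, by omega, by omega⟩
      · exact ⟨0, by omega, by omega, by omega⟩
    have := hshift t ht
    rw [qofpos_of_lt h1, qofpos_of_le h2] at this
    simp only [QuaternionGroup.a_mul_xa, reduceCtorEq] at this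
  · rcases le_or_gt p (2 * k) with hb | hb
    · have := hshift 0 (by omega)
      rw [qofpos_of_le (by omega), qofpos_of_le (by omega)] at this
      simp only [QuaternionGroup.xa_mul_a, reduceCtorEq] at this
    · have h0 := hshift 0 (by omega)
      have h1 := hshift 1 (by omega)
      rw [qofpos_of_lt (by omega), qofpos_of_le (by omega)] at h0 h1
      simp only [QuaternionGroup.xa_mul_xa, QuaternionGroup.a.injEq] at h0 h1
      rw [show p + 1 - 2 * k - 1 = (p + 0 - 2 * k - 1) + 1 by omega,
        show 1 + 1 - 1 = 1 by rfl] at h1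
      push_cast at h0 h1
      have h2 : ((2 : ℕ) : ZMod (2 * k)) = 0 := by push_cast; linear_combination h0 - h1
      rw [ZMod.natCast_eq_zero_iff] at h2
      have := Nat.le_of_dvd (by omega) h2
      omega

theorem segWord_toList_dropLast (hk : 2 ≤ k) (g : QuaternionGroup k) (a len : ℕ) :
    (segWord k hk g a len).toList.dropLast = (segWord k hk g a (len - 1)).toList := by
  cases len with
  | zero => rfl
  | succ len => simp [segWord, List.range'_concat]

theorem segWord_toList_eq_drop (hk : 2 ≤ k) (g : QuaternionGroup k) (i : ℕ) :
    (segWord k hk g (i + 1) (4 * k - i)).toList = (segWord k hk g 1 (4 * k)).toList.drop i := by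
  simp [segWord, ← List.map_drop, List.drop_range', Nat.add_comm]

theorem baseWord_eq_segWord_one (hk : 2 ≤ k) : baseWord k = segWord k hk 1 1 (4 * k) := by
  apply FreeMonoid.toList.injective
  refine List.ext_getElem (by simp [baseWord, segWord]) fun t h _ => ?_
  have ht : t < 4 * k := by simpa [baseWord] using h
  simp only [baseWord, segWord, FreeMonoid.toList_ofList, List.getElem_ofFn, List.getElem_map,
    List.getElem_range']
  ext
  simp only [qletter, qact, one_mul]
  rw [qpos_qofpos (by omega) (by omega)]
  omega

def relators (k : ℕ) (hk : 2 ≤ k) : Set (List (Fin (4 * k))) :=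
  Set.range fun γ => (segWord k hk γ 1 (4 * k)).toList

theorem length_of_mem_relators (hk : 2 ≤ k) {r : List (Fin (4 * k))} (hr : r ∈ relators k hk) :
    r.length = 4 * k := by
  obtain ⟨γ, rfl⟩ := hr
  simp [segWord]

theorem overlapFree_relators (hk : 2 ≤ k) : OverlapFree (relators k hk) := by
  rintro _ ⟨c, rfl⟩ _ ⟨d, rfl⟩ s hsuf hpre hlt
  by_contra! hs
  rw [length_of_mem_relators hk ⟨c, rfl⟩] at hlt
  refine not_forall_mul_qofpos_shift hk (d⁻¹ * c) (p := 4 * k + 1 - s.length) (by omega) hs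
    (by omega) fun t ht => ?_
  have hletter := (hsuf.getElem ht).symm.trans (hpre.getElem ht)
  simp only [segWord, FreeMonoid.toList_ofList, List.getElem_map, List.getElem_range',
    List.length_map, List.length_range', Nat.one_mul] at hletter
  rw [show 4 * k + 1 - s.length + t = 1 + (4 * k - s.length + t) by omega, mul_assoc,
    mul_qofpos_eq_of_qletter_eq hk hletter, inv_mul_cancel_left]

theorem isRelChainFrom_iff_of_qcon (hk : 2 ≤ k) {r x : List (Fin (4 * k))}
    (hr : r ∈ relators k hk) (hx : x <:+ r) (hxn : x.length < 4 * k)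
    {w v : FreeMonoid (Fin (4 * k))} (h : qcon k hk w v) :
    IsRelChainFrom (relators k hk) x w.toList ↔ IsRelChainFrom (relators k hk) x v.toList := by
  refine iff_of_conGen (P := fun w => IsRelChainFrom (relators k hk) x w.toList) ?_ h
  rintro _ _ l u ⟨rfl, γ, rfl⟩
  have hov := overlapFree_relators hk
  have hR : ∀ r ∈ relators k hk, r.length = 4 * k := fun _ => length_of_mem_relators hk
  simp only [FreeMonoid.toList_mul, List.append_assoc, baseWord_eq_segWord_one hk]
  exact ⟨hov.isRelChainFrom_replace hR hr hx hxn ⟨1, rfl⟩ ⟨γ, rfl⟩,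
    hov.isRelChainFrom_replace hR hr hx hxn ⟨γ, rfl⟩ ⟨1, rfl⟩⟩

end Quaternion

theorem stmt10_general (k : ℕ) (hk : 2 ≤ k) (i : ℕ) (hi1 : 1 ≤ i)
    (g : QuaternionGroup k) (w1 w2 : FreeMonoid (Fin (4 * k)))
    (hπ : (qcon k hk).mk' w1 = (qcon k hk).mk' (segWord k hk g (i + 1) (4 * k - i) * w2)) :
    (∃ w2' : FreeMonoid (Fin (4 * k)), w1 = segWord k hk g (i + 1) (4 * k - i) * w2') ∨
    (∃ (γ : QuaternionGroup k) (w2'' : FreeMonoid (Fin (4 * k))),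
      w1 = segWord k hk g (i + 1) (4 * k - 1 - i) * segWord k hk γ 1 (4 * k - 1) * w2'') := by
  set x := (segWord k hk g (i + 1) (4 * k - i)).toList
  have hx : x <:+ (segWord k hk g 1 (4 * k)).toList := by
    rw [show x = _ from segWord_toList_eq_drop hk g i]
    exact List.drop_suffix _ _
  have hxn : x.length < 4 * k := by simp [x, segWord]; omega
  have hchain : IsRelChainFrom (relators k hk) x w1.toList :=
    (isRelChainFrom_iff_of_qcon hk ⟨g, rfl⟩ hx hxn ((Con.eq _).mp hπ)).mpr (.inl (by simp [x]))
  rcases hchain with ⟨u, hu⟩ | ⟨w', hw', hw⟩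
  · exact .inl ⟨.ofList u, FreeMonoid.toList.injective (by simp [← hu, x])⟩
  · obtain ⟨_, ⟨γ, rfl⟩, w'', rfl⟩ := hw'.exists_dropLast_prefix
    refine .inr ⟨γ, .ofList w'', FreeMonoid.toList.injective ?_⟩
    simp only [hw, x, FreeMonoid.toList_mul, FreeMonoid.toList_ofList, segWord_toList_dropLast,
      List.append_assoc, Nat.sub_right_comm (4 * k) i 1]

/-- if `π(w_1) = π(x_{τ(i+1)} ⋯ x_{τ(n)} w_2)` with `1 ≤ i < n`, then
either `w_1 = x_{τ(i+1)} ⋯ x_{τ(n)} w_2'`, or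
`w_1 = x_{τ(i+1)} ⋯ x_{τ(n-1)} x_{γ(1)} ⋯ x_{γ(n-1)} w_2''` for some `γ ∈ H`. -/
theorem stmt10 (k : ℕ) (hk : 2 ≤ k) (i : ℕ) (hi1 : 1 ≤ i) (hi2 : i < 4 * k)
    (g : QuaternionGroup k) (w1 w2 : FreeMonoid (Fin (4 * k)))
    (hπ : (qcon k hk).mk' w1 = (qcon k hk).mk' (segWord k hk g (i + 1) (4 * k - i) * w2)) :
    (∃ w2' : FreeMonoid (Fin (4 * k)), w1 = segWord k hk g (i + 1) (4 * k - i) * w2') ∨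
    (∃ (γ : QuaternionGroup k) (w2'' : FreeMonoid (Fin (4 * k))),
      w1 = segWord k hk g (i + 1) (4 * k - 1 - i) * segWord k hk γ 1 (4 * k - 1) * w2'') :=
  stmt10_general k hk i hi1 g w1 w2 hπ
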